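/- arXiv:1303.3293 — 3 statements merged into one kernel-verified Lean document; each statement's English description precedes it below -/
import Mathlib

section
/- Let r : [t₀, ∞) → ℝ be continuous with R/2 < r(t) < R for all large t, where R > 0, let n ≥ 2 and λ > 0. If u is a nontrivial solution of (r^{n-1} u')' + λ r^{n-1} u = 0 and (t_p) is the increasing sequence of zeros of u, then there is a constant C > 0 (one may take C = π/√(2^{n-1} λ)) such that t_{p+1} − t_p > C for all sufficiently large p. -/
/-!
Between consecutive zeros `a < b` of `u`, compare `u` with `v s = sin (μ (s - a))`,
`μ = √(2^{n-1} λ)`, which solves `((R/2)^{n-1} v')' + λ R^{n-1} v = 0`. Since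
`(R/2)^{n-1} < r^{n-1}` and `λ r^{n-1} < λ R^{n-1}`, Picone's identity makes
`u · r^{n-1} u' - u² (R/2)^{n-1} v' / v` strictly increasing on `(a, b)` as long as `v` does not
vanish there, while it tends to `0` at both ends. Hence `v` has a zero in `(a, b)`, that is,
`b - a > π / μ`.
-/

open Set Filter Real Topology

theorem tendsto_sq_div_nhdsNE_zero {u v : ℝ → ℝ} {c du dv : ℝ}
    (hu : HasDerivAt u du c) (hv : HasDerivAt v dv c) (huc : u c = 0)
    (hvc : v c ≠ 0 ∨ dv ≠ 0) :
    Tendsto (fun t => u t ^ 2 / v t) (𝓝[≠] c) (𝓝 0) := by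
  by_cases hvc0 : v c = 0
  · have hdv : dv ≠ 0 := hvc.resolve_left (not_not_intro hvc0)
    -- near `c`, `u / v` is the quotient of the slopes of `u` and `v` at `c`
    have hquot : Tendsto (fun t => u t / v t) (𝓝[≠] c) (𝓝 (du / dv)) := by
      refine ((hasDerivAt_iff_tendsto_slope.1 hu).div (hasDerivAt_iff_tendsto_slope.1 hv)
        hdv).congr' ?_
      filter_upwards [self_mem_nhdsWithin] with t ht
      have htc : t - c ≠ 0 := sub_ne_zero.2 ht
      show slope u c t / slope v c t = u t / v t
      simp only [slope_def_field, huc, hvc0, sub_zero]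
      rcases eq_or_ne (v t) 0 with hvt | hvt
      · simp [hvt]
      · field_simp
    have hu0 : Tendsto u (𝓝[≠] c) (𝓝 0) :=
      huc ▸ hu.continuousAt.tendsto.mono_left nhdsWithin_le_nhds
    simpa [sq, mul_div_assoc] using hu0.mul hquot
  · have h := ((hu.continuousAt.pow 2).div hv.continuousAt hvc0).tendsto
    simp only [Pi.div_apply, Pi.pow_apply, huc, zero_pow two_ne_zero, zero_div] at h
    exact h.mono_left nhdsWithin_le_nhds

theorem StrictMonoOn.lt_of_tendsto_nhdsGT_nhdsLT {f : ℝ → ℝ} {a b l l' : ℝ}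
    (hf : StrictMonoOn f (Ioo a b)) (hab : a < b)
    (ha : Tendsto f (𝓝[>] a) (𝓝 l)) (hb : Tendsto f (𝓝[<] b) (𝓝 l')) : l < l' := by
  obtain ⟨s₁, has₁, hs₁b⟩ := exists_between hab
  obtain ⟨s₂, hs₁s₂, hs₂b⟩ := exists_between hs₁b
  have hs₁ : s₁ ∈ Ioo a b := ⟨has₁, hs₁b⟩
  have hs₂ : s₂ ∈ Ioo a b := ⟨has₁.trans hs₁s₂, hs₂b⟩
  have hl : l ≤ f s₁ := by
    refine le_of_tendsto ha ?_
    filter_upwards [Ioo_mem_nhdsGT has₁] with x hx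
    exact (hf ⟨hx.1, hx.2.trans hs₁b⟩ hs₁ hx.2).le
  have hl' : f s₂ ≤ l' := by
    refine ge_of_tendsto hb ?_
    filter_upwards [Ioo_mem_nhdsLT hs₂b] with x hx
    exact (hf hs₂ ⟨(has₁.trans hs₁s₂).trans hx.1, hx.2⟩ hx.1).le
  exact hl.trans_lt ((hf hs₁ hs₂ hs₁s₂).trans_le hl')

section Picone

variable {u u' p q v v' P Q : ℝ → ℝ}

noncomputable def piconeFun (u u' p v v' P : ℝ → ℝ) (s : ℝ) : ℝ :=
  u s * (p s * u' s) - u s ^ 2 / v s * (P s * v' s)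

theorem hasDerivAt_piconeFun {t : ℝ} (hu : HasDerivAt u (u' t) t)
    (hpu : HasDerivAt (fun s => p s * u' s) (-(q t * u t)) t) (hv : HasDerivAt v (v' t) t)
    (hPv : HasDerivAt (fun s => P s * v' s) (-(Q t * v t)) t) (hvt : v t ≠ 0) :
    HasDerivAt (piconeFun u u' p v v' P)
      ((Q t - q t) * u t ^ 2 + (p t - P t) * u' t ^ 2
        + P t * (u' t - u t * v' t / v t) ^ 2) t := by
  have hsq : HasDerivAt (fun s => u s ^ 2) (2 * u t * u' t) t := by
    simpa using hu.fun_pow 2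
  refine ((hu.mul hpu).sub ((hsq.fun_div hv hvt).mul hPv)).congr_deriv ?_
  field_simp
  ring

theorem tendsto_piconeFun_nhdsNE {c : ℝ} (hu : HasDerivAt u (u' c) c)
    (hpu : ContinuousAt (fun s => p s * u' s) c) (hv : HasDerivAt v (v' c) c)
    (hPv : ContinuousAt (fun s => P s * v' s) c) (huc : u c = 0) (hvc : v c ≠ 0 ∨ v' c ≠ 0) :
    Tendsto (piconeFun u u' p v v' P) (𝓝[≠] c) (𝓝 0) := by
  have hup : Tendsto (fun s => u s * (p s * u' s)) (𝓝[≠] c) (𝓝 0) := by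
    have h := (hu.continuousAt.fun_mul hpu).tendsto
    simp only [huc, zero_mul] at h
    exact h.mono_left nhdsWithin_le_nhds
  unfold piconeFun
  simpa using hup.sub ((tendsto_sq_div_nhdsNE_zero hu hv huc hvc).mul
    (hPv.tendsto.mono_left nhdsWithin_le_nhds))

theorem exists_zero_of_sturm_picone {a b : ℝ} (hab : a < b)
    (hu : ∀ t ∈ Icc a b, HasDerivAt u (u' t) t)
    (hpu : ∀ t ∈ Icc a b, HasDerivAt (fun s => p s * u' s) (-(q t * u t)) t)
    (hv : ∀ t ∈ Icc a b, HasDerivAt v (v' t) t)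
    (hPv : ∀ t ∈ Icc a b, HasDerivAt (fun s => P s * v' s) (-(Q t * v t)) t)
    (hua : u a = 0) (hub : u b = 0) (hu0 : ∀ t ∈ Ioo a b, u t ≠ 0)
    (hqQ : ∀ t ∈ Ioo a b, q t < Q t) (hP : ∀ t ∈ Ioo a b, 0 ≤ P t ∧ P t ≤ p t)
    (hva : v a ≠ 0 ∨ v' a ≠ 0) (hvb : v b ≠ 0 ∨ v' b ≠ 0) :
    ∃ t ∈ Ioo a b, v t = 0 := by
  by_contra! hv0
  have hmono : StrictMonoOn (piconeFun u u' p v v' P) (Ioo a b) := by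
    have hderiv : ∀ t ∈ Ioo a b, HasDerivAt (piconeFun u u' p v v' P)
        ((Q t - q t) * u t ^ 2 + (p t - P t) * u' t ^ 2
          + P t * (u' t - u t * v' t / v t) ^ 2) t := fun t ht =>
      hasDerivAt_piconeFun (hu t (Ioo_subset_Icc_self ht)) (hpu t (Ioo_subset_Icc_self ht))
        (hv t (Ioo_subset_Icc_self ht)) (hPv t (Ioo_subset_Icc_self ht)) (hv0 t ht)
    refine strictMonoOn_of_deriv_pos (convex_Ioo a b)
      (fun t ht => (hderiv t ht).continuousAt.continuousWithinAt) fun t ht => ?_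
    rw [interior_Ioo] at ht
    rw [(hderiv t ht).deriv]
    have h₁ : 0 < (Q t - q t) * u t ^ 2 :=
      mul_pos (sub_pos.2 (hqQ t ht)) (sq_pos_of_ne_zero (hu0 t ht))
    have h₂ : 0 ≤ (p t - P t) * u' t ^ 2 := mul_nonneg (sub_nonneg.2 (hP t ht).2) (sq_nonneg _)
    have h₃ : 0 ≤ P t * (u' t - u t * v' t / v t) ^ 2 := mul_nonneg (hP t ht).1 (sq_nonneg _)
    linarith
  have hlim (c : ℝ) (hc : c ∈ Icc a b) (huc : u c = 0) (hvc : v c ≠ 0 ∨ v' c ≠ 0) :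
      Tendsto (piconeFun u u' p v v' P) (𝓝[≠] c) (𝓝 0) :=
    tendsto_piconeFun_nhdsNE (hu c hc) (hpu c hc).continuousAt (hv c hc)
      (hPv c hc).continuousAt huc hvc
  exact (hmono.lt_of_tendsto_nhdsGT_nhdsLT hab
    ((hlim a (left_mem_Icc.2 hab.le) hua hva).mono_left (nhdsWithin_mono _ fun _ hx => hx.ne'))
    ((hlim b (right_mem_Icc.2 hab.le) hub hvb).mono_left
      (nhdsWithin_mono _ fun _ hx => hx.ne))).false

end Picone

theorem sin_ne_zero_or_cos_ne_zero (x : ℝ) : sin x ≠ 0 ∨ cos x ≠ 0 := by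
  by_contra! h
  simpa [h.1, h.2] using sin_sq_add_cos_sq x

theorem pi_div_sqrt_lt_sub_of_consecutive_zeros {a b R lam : ℝ} {m : ℕ} {r u u' : ℝ → ℝ}
    (hab : a < b) (hm : m ≠ 0) (hlam : 0 < lam)
    (hr : ∀ t ∈ Ioo a b, R / 2 < r t ∧ r t < R)
    (hu : ∀ t ∈ Icc a b, HasDerivAt u (u' t) t)
    (hode : ∀ t ∈ Icc a b, HasDerivAt (fun s => r s ^ m * u' s) (-(lam * r t ^ m * u t)) t)
    (hua : u a = 0) (hub : u b = 0) (hu0 : ∀ t ∈ Ioo a b, u t ≠ 0) :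
    π / √(2 ^ m * lam) < b - a := by
  set μ := √(2 ^ m * lam)
  have hμ : 0 < μ := sqrt_pos.2 (by positivity)
  have hμ2 : (R / 2) ^ m * μ ^ 2 = lam * R ^ m := by
    rw [sq_sqrt (by positivity), div_pow]
    field_simp
  have hlin (t : ℝ) : HasDerivAt (fun s => μ * (s - a)) μ t := by
    simpa using ((hasDerivAt_id t).sub_const a).const_mul μ
  -- the comparison solution `sin (μ (s - a))` of `((R/2)^m v')' + λ R^m v = 0`
  obtain ⟨t, ht, hsin⟩ := exists_zero_of_sturm_picone (v := fun s => sin (μ * (s - a)))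
    (v' := fun s => μ * cos (μ * (s - a))) (P := fun _ => (R / 2) ^ m) (Q := fun _ => lam * R ^ m)
    (q := fun s => lam * r s ^ m) hab hu hode
    (fun t _ => by simpa [mul_comm] using (hlin t).sin)
    (fun t _ => by
      refine (((hlin t).cos.const_mul μ).const_mul ((R / 2) ^ m)).congr_deriv ?_
      linear_combination (-sin (μ * (t - a))) * hμ2)
    hua hub hu0
    (fun t ht => mul_lt_mul_of_pos_left
      (pow_lt_pow_left₀ (hr t ht).2 (by linarith [hr t ht]) hm) hlam)
    (fun t ht => ⟨pow_nonneg (by linarith [hr t ht]) m,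
      pow_le_pow_left₀ (by linarith [hr t ht]) (hr t ht).1.le m⟩)
    (Or.inr (by simpa using hμ.ne'))
    ((sin_ne_zero_or_cos_ne_zero _).imp_right (mul_ne_zero hμ.ne'))
  have hπ : π ≤ μ * (t - a) := by
    by_contra! h
    exact (sin_pos_of_pos_of_lt_pi (mul_pos hμ (sub_pos.2 ht.1)) h).ne' hsin
  calc π / μ ≤ t - a := (div_le_iff₀' hμ).2 hπ
    _ < b - a := by linarith [ht.2]

theorem stmt3_general (t₀ R lam : ℝ) (n : ℕ) (hn : 2 ≤ n) (hlam : 0 < lam)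
    (r u u' : ℝ → ℝ)
    (hr : ∃ T₁ : ℝ, ∀ t, T₁ ≤ t → R / 2 < r t ∧ r t < R)
    (hu : ∀ t ∈ Ici t₀, HasDerivAt u (u' t) t)
    (hode : ∀ t ∈ Ici t₀,
      HasDerivAt (fun s => r s ^ (n - 1) * u' s) (-(lam * r t ^ (n - 1) * u t)) t)
    (tseq : ℕ → ℝ)
    (htseq_mem : ∀ p, tseq p ∈ Ici t₀)
    (htseq_mono : StrictMono tseq)
    (htseq_tendsto : Tendsto tseq atTop atTop)
    (htseq_zero : ∀ p, u (tseq p) = 0)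
    (htseq_all : ∀ s ∈ Ici t₀, u s = 0 → ∃ p, s = tseq p) :
    ∃ C : ℝ, 0 < C ∧ C = π / Real.sqrt (2 ^ (n - 1) * lam) ∧
      ∃ P : ℕ, ∀ p, P ≤ p → C < tseq (p + 1) - tseq p := by
  obtain ⟨T₁, hT₁⟩ := hr
  obtain ⟨P, hP⟩ := eventually_atTop.1 (htseq_tendsto.eventually_ge_atTop T₁)
  refine ⟨_, div_pos pi_pos (sqrt_pos.2 (by positivity)), rfl, P, fun p hp => ?_⟩
  have hIcc : Icc (tseq p) (tseq (p + 1)) ⊆ Ici t₀ := fun t ht => (htseq_mem p).trans ht.1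
  have hu0 : ∀ t ∈ Ioo (tseq p) (tseq (p + 1)), u t ≠ 0 := by
    rintro t ⟨hpt, htp⟩ hut
    obtain ⟨q, rfl⟩ := htseq_all t (hIcc ⟨hpt.le, htp.le⟩) hut
    have := htseq_mono.lt_iff_lt.1 hpt
    have := htseq_mono.lt_iff_lt.1 htp
    omega
  exact pi_div_sqrt_lt_sub_of_consecutive_zeros (htseq_mono p.lt_succ_self) (by omega) hlam
    (fun t ht => hT₁ t ((hP p hp).trans ht.1.le)) (fun t ht => hu t (hIcc ht))
    (fun t ht => hode t (hIcc ht)) (htseq_zero p) (htseq_zero (p + 1)) hu0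

/-- Zeros of solutions of `(r^{n-1} u')' + λ r^{n-1} u = 0` are uniformly separated:
eventually `t_{p+1} - t_p > π / √(2^{n-1} λ)`. -/
theorem stmt3 (t₀ R lam : ℝ) (n : ℕ) (hn : 2 ≤ n) (hR : 0 < R) (hlam : 0 < lam)
    (r u u' : ℝ → ℝ)
    (hr_cont : ContinuousOn r (Ici t₀))
    (hr : ∃ T₁ : ℝ, ∀ t, T₁ ≤ t → R / 2 < r t ∧ r t < R)
    (hu : ∀ t ∈ Ici t₀, HasDerivAt u (u' t) t)
    (hode : ∀ t ∈ Ici t₀,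
      HasDerivAt (fun s => r s ^ (n - 1) * u' s) (-(lam * r t ^ (n - 1) * u t)) t)
    (hnontriv : ∃ t ∈ Ici t₀, u t ≠ 0)
    (tseq : ℕ → ℝ)
    (htseq_mem : ∀ p, tseq p ∈ Ici t₀)
    (htseq_mono : StrictMono tseq)
    (htseq_tendsto : Tendsto tseq atTop atTop)
    (htseq_zero : ∀ p, u (tseq p) = 0)
    (htseq_all : ∀ s ∈ Ici t₀, u s = 0 → ∃ p, s = tseq p) :
    ∃ C : ℝ, 0 < C ∧ C = π / Real.sqrt (2 ^ (n - 1) * lam) ∧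
      ∃ P : ℕ, ∀ p, P ≤ p → C < tseq (p + 1) - tseq p :=
  stmt3_general t₀ R lam n hn hlam r u u' hr hu hode tseq htseq_mem htseq_mono htseq_tendsto
    htseq_zero htseq_all
end

section
/- Let r : [t₀, ∞) → ℝ be continuous, increasing, with 0 < r(t) < R, let n ≥ 2, λ > 0, and let u solve (r^{n-1} u')' + λ r^{n-1} u = 0 with consecutive zeros t_k < t_{k+1} and u'(t_k) ≠ 0. Define w_k(t) = (u'(t_k)/√λ) · sin(√λ · r(t_k)^{n-1} ∫_{t_k}^t ds/r(s)^{n-1}). Then |u(t)| ≤ |w_k(t)| for all t in (t_k, t_{k+1}). -/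
/-!
With `p = r ^ (n - 1)` and `c = p t_k`, `w_k` solves `(p w')' + λ (c² / p) w = 0` with the same
initial data as `u`. Since `r` is increasing, `c² / p ≤ p` to the right of `t_k`, so the Wronskian
`G = w (p u') - u (p w')` has `G' = λ (c² / p - p) u w ≤ 0` as long as `u w ≥ 0`, and `G t_k = 0`.
Sturm's argument shows that `w_k` stays positive up to the next zero of `u`: at a first zero `τ`
of `w_k` we would get `G τ = -u τ · (p w') τ > 0`. Then `(u / w)' = G / (p w²) ≤ 0`, so `u / w`
decreases from its limit `1` at `t_k`. The case `u' t_k < 0` follows by replacing `u` with `-u`.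
-/

open Set Real intervalIntegral
open Filter Topology

theorem hasDerivAt_wronskian {u w U V : ℝ → ℝ} {u' w' p Q₁ Q₂ x : ℝ}
    (hu : HasDerivAt u u' x) (hw : HasDerivAt w w' x)
    (hU : HasDerivAt U (-(Q₁ * u x)) x) (hV : HasDerivAt V (-(Q₂ * w x)) x)
    (hUx : U x = p * u') (hVx : V x = p * w') :
    HasDerivAt (fun s => w s * U s - u s * V s) ((Q₂ - Q₁) * u x * w x) x := by
  refine ((hw.mul hU).sub (hu.mul hV)).congr_deriv ?_
  rw [hUx, hVx]
  ring

theorem wronskian_nonpos_of_comparison {u w U V u' w' p Q₁ Q₂ : ℝ → ℝ} {a b : ℝ}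
    (hG : ContinuousOn (fun s => w s * U s - u s * V s) (Icc a b))
    (hu : ∀ x ∈ Ioo a b, HasDerivAt u (u' x) x) (hw : ∀ x ∈ Ioo a b, HasDerivAt w (w' x) x)
    (hU : ∀ x ∈ Ioo a b, HasDerivAt U (-(Q₁ x * u x)) x)
    (hV : ∀ x ∈ Ioo a b, HasDerivAt V (-(Q₂ x * w x)) x)
    (hUp : ∀ x ∈ Ioo a b, U x = p x * u' x) (hVp : ∀ x ∈ Ioo a b, V x = p x * w' x)
    (hQ : ∀ x ∈ Ioo a b, Q₂ x ≤ Q₁ x) (huw : ∀ x ∈ Ioo a b, 0 ≤ u x * w x)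
    (hua : u a = 0) (hwa : w a = 0) {x : ℝ} (hx : x ∈ Icc a b) :
    w x * U x - u x * V x ≤ 0 := by
  have hanti : AntitoneOn (fun s => w s * U s - u s * V s) (Icc a b) := by
    refine antitoneOn_of_hasDerivWithinAt_nonpos (f' := fun y => (Q₂ y - Q₁ y) * u y * w y)
      (convex_Icc a b) hG (fun y hy => ?_) (fun y hy => ?_) <;> rw [interior_Icc] at hy
    · exact (hasDerivAt_wronskian (hu y hy) (hw y hy) (hU y hy) (hV y hy) (hUp y hy)
        (hVp y hy)).hasDerivWithinAt
    · rw [mul_assoc]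
      exact mul_nonpos_of_nonpos_of_nonneg (sub_nonpos.2 (hQ y hy)) (huw y hy)
  simpa [hua, hwa] using hanti (left_mem_Icc.2 (hx.1.trans hx.2)) hx hx.1

theorem le_of_wronskian_nonpos {u w u' w' : ℝ → ℝ} {a b : ℝ}
    (hu : ∀ x ∈ Ioo a b, HasDerivAt u (u' x) x) (hw : ∀ x ∈ Ioo a b, HasDerivAt w (w' x) x)
    (hw_pos : ∀ x ∈ Ioo a b, 0 < w x) (hW : ∀ x ∈ Ioo a b, u' x * w x - u x * w' x ≤ 0)
    (hlim : Tendsto (fun s => u s / w s) (𝓝[>] a) (𝓝 1)) {x : ℝ} (hx : x ∈ Ioo a b) :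
    u x ≤ w x := by
  have hquot : ∀ y ∈ Ioo a b, HasDerivAt (fun s => u s / w s)
      ((u' y * w y - u y * w' y) / w y ^ 2) y :=
    fun y hy => (hu y hy).div (hw y hy) (hw_pos y hy).ne'
  have hanti : AntitoneOn (fun s => u s / w s) (Ioo a b) := by
    refine antitoneOn_of_hasDerivWithinAt_nonpos
      (f' := fun y => (u' y * w y - u y * w' y) / w y ^ 2) (convex_Ioo a b)
      (fun y hy => (hquot y hy).continuousAt.continuousWithinAt) (fun y hy => ?_) (fun y hy => ?_)
      <;> rw [interior_Ioo] at hy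
    · exact (hquot y hy).hasDerivWithinAt
    · exact div_nonpos_of_nonpos_of_nonneg (hW y hy) (sq_nonneg _)
  have hle : u x / w x ≤ 1 := by
    refine ge_of_tendsto hlim ?_
    filter_upwards [Ioo_mem_nhdsGT hx.1] with s hs
    exact hanti ⟨hs.1, hs.2.trans hx.2⟩ hx hs.2.le
  exact (div_le_one (hw_pos x hx)).1 hle

theorem tendsto_div_nhdsGT_of_hasDerivWithinAt {u w : ℝ → ℝ} {a A : ℝ} (hA : A ≠ 0)
    (hu : HasDerivWithinAt u A (Ioi a) a) (hw : HasDerivWithinAt w A (Ioi a) a)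
    (hua : u a = 0) (hwa : w a = 0) : Tendsto (fun s => u s / w s) (𝓝[>] a) (𝓝 1) := by
  have hslope := ((hasDerivWithinAt_iff_tendsto_slope' self_notMem_Ioi).1 hu).div
    ((hasDerivWithinAt_iff_tendsto_slope' self_notMem_Ioi).1 hw) hA
  rw [div_self hA] at hslope
  refine hslope.congr' ?_
  filter_upwards [self_mem_nhdsWithin] with s hs
  simp only [Pi.div_apply, slope_def_field, hua, hwa, sub_zero]
  exact div_div_div_cancel_right₀ (sub_pos.2 hs).ne' _ _

theorem pos_of_hasDerivWithinAt_pos {u : ℝ → ℝ} {a b A : ℝ} (hA : 0 < A)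
    (hu : HasDerivWithinAt u A (Ioi a) a) (hua : u a = 0) (hcont : ContinuousOn u (Ioo a b))
    (hne : ∀ t ∈ Ioo a b, u t ≠ 0) {t : ℝ} (ht : t ∈ Ioo a b) : 0 < u t := by
  have hslope := (hasDerivWithinAt_iff_tendsto_slope' self_notMem_Ioi).1 hu
  obtain ⟨s, hs_slope, hs⟩ := ((hslope.eventually (eventually_gt_nhds hA)).and
    (Ioo_mem_nhdsGT (ht.1.trans ht.2))).exists
  have hus : 0 < u s := by
    rw [slope_def_field, hua, sub_zero] at hs_slope
    exact (div_pos_iff_of_pos_right (sub_pos.2 hs.1)).1 hs_slope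
  by_contra! hut
  obtain ⟨z, hz, huz⟩ := isPreconnected_Ioo.intermediate_value ht hs hcont ⟨hut, hus.le⟩
  exact hne z hz huz

theorem hasDerivAt_integral_of_continuousOn_Ici {q : ℝ → ℝ} {a x : ℝ}
    (hq : ContinuousOn q (Ici a)) (hx : a < x) :
    HasDerivAt (fun t => ∫ s in a..t, q s) (q x) x :=
  integral_hasDerivAt_right ((hq.mono (uIcc_of_le hx.le ▸ Icc_subset_Ici_self)).intervalIntegrable)
    ((hq.mono (Ioi_subset_Ici_self)).stronglyMeasurableAtFilter isOpen_Ioi x hx)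
    (hq.continuousAt (Ici_mem_nhds hx))

theorem hasDerivWithinAt_integral_of_continuousOn_Ici {q : ℝ → ℝ} {a x : ℝ}
    (hq : ContinuousOn q (Ici a)) (hx : a ≤ x) :
    HasDerivWithinAt (fun t => ∫ s in a..t, q s) (q x) (Ici a) x := by
  obtain rfl | hx := hx.eq_or_lt
  · exact integral_hasDerivWithinAt_right (t := Ioi a) IntervalIntegrable.refl
      ((hq.mono Ioi_subset_Ici_self).stronglyMeasurableAtFilter_nhdsWithin measurableSet_Ioi a)
      ((hq a self_mem_Ici).mono Ioi_subset_Ici_self)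
  · exact (hasDerivAt_integral_of_continuousOn_Ici hq hx).hasDerivWithinAt

noncomputable def comparisonPhase (lam : ℝ) (p : ℝ → ℝ) (a t : ℝ) : ℝ :=
  √lam * p a * ∫ s in a..t, 1 / p s

section comparisonPhase

variable {lam a x : ℝ} {p : ℝ → ℝ}

@[simp]
theorem comparisonPhase_self : comparisonPhase lam p a a = 0 := by
  simp [comparisonPhase]

theorem hasDerivAt_comparisonPhase (hp : ContinuousOn p (Ici a)) (hp0 : ∀ t ∈ Ici a, p t ≠ 0)
    (hx : a < x) : HasDerivAt (comparisonPhase lam p a) (√lam * p a / p x) x :=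
  ((hasDerivAt_integral_of_continuousOn_Ici (continuousOn_const.div hp hp0) hx).const_mul
    (√lam * p a)).congr_deriv (mul_one_div _ _)

theorem hasDerivWithinAt_comparisonPhase (hp : ContinuousOn p (Ici a))
    (hp0 : ∀ t ∈ Ici a, p t ≠ 0) (hx : a ≤ x) :
    HasDerivWithinAt (comparisonPhase lam p a) (√lam * p a / p x) (Ici a) x :=
  ((hasDerivWithinAt_integral_of_continuousOn_Ici (continuousOn_const.div hp hp0) hx).const_mul
    (√lam * p a)).congr_deriv (mul_one_div _ _)

theorem continuousOn_comparisonPhase (hp : ContinuousOn p (Ici a))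
    (hp0 : ∀ t ∈ Ici a, p t ≠ 0) : ContinuousOn (comparisonPhase lam p a) (Ici a) :=
  fun _ hx => (hasDerivWithinAt_comparisonPhase hp hp0 hx).continuousWithinAt

theorem strictMonoOn_comparisonPhase (hlam : 0 < lam) (hp : ContinuousOn p (Ici a))
    (hp0 : ∀ t ∈ Ici a, 0 < p t) : StrictMonoOn (comparisonPhase lam p a) (Ici a) := by
  have hp0' : ∀ t ∈ Ici a, p t ≠ 0 := fun t ht => (hp0 t ht).ne'
  refine strictMonoOn_of_hasDerivWithinAt_pos (f' := fun y => √lam * p a / p y) (convex_Ici a)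
    (continuousOn_comparisonPhase hp hp0') (fun y hy => ?_) (fun y hy => ?_) <;>
    rw [interior_Ici] at hy
  · exact (hasDerivAt_comparisonPhase hp hp0' hy).hasDerivWithinAt
  · have := hp0 a self_mem_Ici
    have := hp0 y (Ioi_subset_Ici_self hy)
    positivity

theorem hasDerivAt_comparisonSolution (A : ℝ) (hlam : 0 < lam) (hp : ContinuousOn p (Ici a))
    (hp0 : ∀ t ∈ Ici a, p t ≠ 0) (hx : a < x) :
    HasDerivAt (fun t => A / √lam * sin (comparisonPhase lam p a t))
      (A * p a * cos (comparisonPhase lam p a x) / p x) x := by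
  refine (((hasDerivAt_comparisonPhase hp hp0 hx).sin).const_mul (A / √lam)).congr_deriv ?_
  have := hp0 x hx.le
  have := sqrt_pos.2 hlam
  field_simp

theorem hasDerivAt_comparisonFlux (A : ℝ) (hp : ContinuousOn p (Ici a))
    (hp0 : ∀ t ∈ Ici a, p t ≠ 0) (hx : a < x) :
    HasDerivAt (fun t => A * p a * cos (comparisonPhase lam p a t))
      (-(lam * p a ^ 2 / p x * (A / √lam * sin (comparisonPhase lam p a x)))) x := by
  refine (((hasDerivAt_comparisonPhase hp hp0 hx).cos).const_mul (A * p a)).congr_deriv ?_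
  have h : lam * (A / √lam) = A * √lam := by rw [mul_div_left_comm, div_sqrt, mul_comm]
  linear_combination (p a ^ 2 * sin (comparisonPhase lam p a x) / p x) * h

theorem hasDerivWithinAt_comparisonSolution_left (A : ℝ) (hlam : 0 < lam)
    (hp : ContinuousOn p (Ici a)) (hp0 : ∀ t ∈ Ici a, p t ≠ 0) :
    HasDerivWithinAt (fun t => A / √lam * sin (comparisonPhase lam p a t)) A (Ioi a) a := by
  refine ((((hasDerivWithinAt_comparisonPhase hp hp0 le_rfl).sin).const_mul (A / √lam)).mono
    Ioi_subset_Ici_self).congr_deriv ?_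
  have := hp0 a self_mem_Ici
  have := sqrt_pos.2 hlam
  field_simp
  simp

end comparisonPhase

theorem comparisonWronskian_nonpos {p u u' : ℝ → ℝ} {a τ lam A : ℝ} (hlam : 0 < lam) (hA : 0 ≤ A)
    (hp_cont : ContinuousOn p (Ici a)) (hp_mono : MonotoneOn p (Ici a))
    (hp : ∀ t ∈ Ici a, 0 < p t) (hu : ∀ t ∈ Ici a, HasDerivAt u (u' t) t)
    (hode : ∀ t ∈ Ici a, HasDerivAt (fun s => p s * u' s) (-(lam * p t * u t)) t)
    (hua : u a = 0) (hu_pos : ∀ t ∈ Ioo a τ, 0 < u t)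
    (hφ : ∀ t ∈ Ioo a τ, comparisonPhase lam p a t ≤ π) {x : ℝ} (hx : x ∈ Icc a τ) :
    A / √lam * sin (comparisonPhase lam p a x) * (p x * u' x)
      - u x * (A * p a * cos (comparisonPhase lam p a x)) ≤ 0 := by
  set φ := comparisonPhase lam p a
  have hp0 : ∀ t ∈ Ici a, p t ≠ 0 := fun t ht => (hp t ht).ne'
  have hIoo : Ioo a τ ⊆ Ici a := fun t ht => le_of_lt ht.1
  have hIcc : Icc a τ ⊆ Ici a := fun t ht => ht.1
  have hφc := (continuousOn_comparisonPhase (lam := lam) hp_cont hp0).mono hIcc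
  have huc : ContinuousOn u (Icc a τ) :=
    fun t ht => (hu t (hIcc ht)).continuousAt.continuousWithinAt
  have hUc : ContinuousOn (fun s => p s * u' s) (Icc a τ) :=
    fun t ht => (hode t (hIcc ht)).continuousAt.continuousWithinAt
  refine wronskian_nonpos_of_comparison (u' := u') (p := p)
    (w' := fun s => A * p a * cos (φ s) / p s)
    (Q₁ := fun s => lam * p s) (Q₂ := fun s => lam * p a ^ 2 / p s) ?_
    (fun t ht => hu t (hIoo ht))
    (fun t ht => hasDerivAt_comparisonSolution A hlam hp_cont hp0 ht.1)
    (fun t ht => hode t (hIoo ht))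
    (fun t ht => hasDerivAt_comparisonFlux A hp_cont hp0 ht.1)
    (fun t ht => rfl) (fun t ht => (mul_div_cancel₀ _ (hp0 t (hIoo ht))).symm)
    (fun t ht => ?_) (fun t ht => ?_) hua (by simp) hx
  · fun_prop
  · have hpa := hp a self_mem_Ici
    have hpat : p a ≤ p t := hp_mono self_mem_Ici (hIoo ht) ht.1.le
    rw [div_le_iff₀ (hp t (hIoo ht)), mul_assoc, sq]
    exact mul_le_mul_of_nonneg_left (mul_le_mul hpat hpat hpa.le (hpa.le.trans hpat)) hlam.le
  · have hφ0 : 0 ≤ φ t := by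
      simpa [φ] using (strictMonoOn_comparisonPhase hlam hp_cont hp).monotoneOn self_mem_Ici
        (hIoo ht) ht.1.le
    have := hu_pos t ht
    have := sin_nonneg_of_nonneg_of_le_pi hφ0 (hφ t ht)
    positivity

theorem comparisonPhase_lt_pi {p u u' : ℝ → ℝ} {a b lam : ℝ} (hlam : 0 < lam)
    (hp_cont : ContinuousOn p (Ici a)) (hp_mono : MonotoneOn p (Ici a))
    (hp : ∀ t ∈ Ici a, 0 < p t) (hu : ∀ t ∈ Ici a, HasDerivAt u (u' t) t)
    (hode : ∀ t ∈ Ici a, HasDerivAt (fun s => p s * u' s) (-(lam * p t * u t)) t)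
    (hua : u a = 0) (hu_pos : ∀ t ∈ Ioo a b, 0 < u t) {t : ℝ} (ht : t ∈ Ioo a b) :
    comparisonPhase lam p a t < π := by
  set φ := comparisonPhase lam p a
  by_contra! hπ
  have hφc : ContinuousOn φ (Icc a t) :=
    (continuousOn_comparisonPhase hp_cont fun s hs => (hp s hs).ne').mono fun s hs => hs.1
  obtain ⟨τ, hτ, hφτ⟩ := intermediate_value_Icc ht.1.le hφc ⟨by simp [φ, pi_pos.le], hπ⟩
  have haτ : a < τ := hτ.1.lt_of_ne (by rintro rfl; simp [φ, pi_ne_zero.symm] at hφτ)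
  have hφ_lt : ∀ s ∈ Ioo a τ, φ s ≤ π := fun s hs => hφτ ▸
    ((strictMonoOn_comparisonPhase hlam hp_cont hp).monotoneOn (le_of_lt hs.1) haτ.le hs.2.le)
  have hG := comparisonWronskian_nonpos (A := 1) hlam zero_le_one hp_cont hp_mono hp hu hode hua
    (fun s hs => hu_pos s ⟨hs.1, hs.2.trans_le (hτ.2.trans ht.2.le)⟩) hφ_lt (right_mem_Icc.2 haτ.le)
  rw [show comparisonPhase lam p a τ = π from hφτ, sin_pi, cos_pi] at hG
  have := hu_pos τ ⟨haτ, hτ.2.trans_lt ht.2⟩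
  have := hp a self_mem_Ici
  nlinarith

theorem abs_le_abs_comparisonSolution_of_pos {p u u' : ℝ → ℝ} {a b lam : ℝ} (hlam : 0 < lam)
    (hp_cont : ContinuousOn p (Ici a)) (hp_mono : MonotoneOn p (Ici a))
    (hp : ∀ t ∈ Ici a, 0 < p t) (hu : ∀ t ∈ Ici a, HasDerivAt u (u' t) t)
    (hode : ∀ t ∈ Ici a, HasDerivAt (fun s => p s * u' s) (-(lam * p t * u t)) t)
    (hua : u a = 0) (hne : ∀ t ∈ Ioo a b, u t ≠ 0) (hA : 0 < u' a) {t : ℝ} (ht : t ∈ Ioo a b) :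
    |u t| ≤ |u' a / √lam * sin (comparisonPhase lam p a t)| := by
  set w := fun s => u' a / √lam * sin (comparisonPhase lam p a s) with hw
  have hp0 : ∀ t ∈ Ici a, p t ≠ 0 := fun t ht => (hp t ht).ne'
  have hIoo : Ioo a b ⊆ Ici a := fun t ht => le_of_lt ht.1
  have hu_pos : ∀ s ∈ Ioo a b, 0 < u s := fun s hs =>
    pos_of_hasDerivWithinAt_pos hA (hu a self_mem_Ici).hasDerivWithinAt hua
      (fun x hx => (hu x (hIoo hx)).continuousAt.continuousWithinAt) hne hs
  have hw_pos : ∀ s ∈ Ioo a b, 0 < w s := fun s hs => by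
    have hφ0 : 0 < comparisonPhase lam p a s := by
      simpa using strictMonoOn_comparisonPhase hlam hp_cont hp self_mem_Ici (hIoo hs) hs.1
    have := sin_pos_of_pos_of_lt_pi hφ0
      (comparisonPhase_lt_pi hlam hp_cont hp_mono hp hu hode hua hu_pos hs)
    positivity
  have hwronskian : ∀ s ∈ Ioo a b, u' s * w s
      - u s * (u' a * p a * cos (comparisonPhase lam p a s) / p s) ≤ 0 := fun s hs => by
    have hG := comparisonWronskian_nonpos hlam hA.le hp_cont hp_mono hp hu hode hua
      (fun x hx => hu_pos x ⟨hx.1, hx.2.trans hs.2⟩)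
      (fun x hx => (comparisonPhase_lt_pi hlam hp_cont hp_mono hp hu hode hua hu_pos
        ⟨hx.1, hx.2.trans hs.2⟩).le) (right_mem_Icc.2 hs.1.le)
    have hps := hp s (hIoo hs)
    have hG_eq : p s * (u' s * w s - u s * (u' a * p a * cos (comparisonPhase lam p a s) / p s))
        = u' a / √lam * sin (comparisonPhase lam p a s) * (p s * u' s)
          - u s * (u' a * p a * cos (comparisonPhase lam p a s)) := by
      rw [hw]
      field_simp
    rw [← mul_le_mul_iff_of_pos_left hps, mul_zero, hG_eq]
    exact hG
  rw [abs_of_pos (hu_pos t ht), abs_of_pos (hw_pos t ht)]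
  exact le_of_wronskian_nonpos (fun s hs => hu s (hIoo hs))
    (fun s hs => hasDerivAt_comparisonSolution _ hlam hp_cont hp0 hs.1) hw_pos hwronskian
    (tendsto_div_nhdsGT_of_hasDerivWithinAt hA.ne' (hu a self_mem_Ici).hasDerivWithinAt
      (hasDerivWithinAt_comparisonSolution_left _ hlam hp_cont hp0) hua (by simp)) ht

theorem abs_le_abs_comparisonSolution {p u u' : ℝ → ℝ} {a b lam : ℝ} (hlam : 0 < lam)
    (hp_cont : ContinuousOn p (Ici a)) (hp_mono : MonotoneOn p (Ici a))
    (hp : ∀ t ∈ Ici a, 0 < p t) (hu : ∀ t ∈ Ici a, HasDerivAt u (u' t) t)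
    (hode : ∀ t ∈ Ici a, HasDerivAt (fun s => p s * u' s) (-(lam * p t * u t)) t)
    (hua : u a = 0) (hne : ∀ t ∈ Ioo a b, u t ≠ 0) (hA : u' a ≠ 0) {t : ℝ} (ht : t ∈ Ioo a b) :
    |u t| ≤ |u' a / √lam * sin (comparisonPhase lam p a t)| := by
  obtain hA | hA := hA.lt_or_gt
  · have h := abs_le_abs_comparisonSolution_of_pos (u := -u) (u' := -u') hlam hp_cont hp_mono hp
      (fun s hs => (hu s hs).neg)
      (fun s hs => by simpa [Pi.neg_def, mul_neg] using (hode s hs).neg) (by simp [hua])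
      (fun s hs => neg_ne_zero.2 (hne s hs)) (neg_pos.2 hA) ht
    simpa [neg_div, abs_neg] using h
  · exact abs_le_abs_comparisonSolution_of_pos hlam hp_cont hp_mono hp hu hode hua hne hA ht

theorem stmt6_general (t₀ R lam : ℝ) (n : ℕ) (hlam : 0 < lam)
    (r u u' : ℝ → ℝ)
    (hr_cont : ContinuousOn r (Ici t₀))
    (hr_mono : StrictMonoOn r (Ici t₀))
    (hr : ∀ t ∈ Ici t₀, 0 < r t ∧ r t < R)
    (hu : ∀ t ∈ Ici t₀, HasDerivAt u (u' t) t)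
    (hode : ∀ t ∈ Ici t₀,
      HasDerivAt (fun s => r s ^ (n - 1) * u' s) (-(lam * r t ^ (n - 1) * u t)) t)
    (tk tk1 : ℝ) (htk : t₀ ≤ tk)
    (hutk : u tk = 0)
    (hconsec : ∀ t ∈ Ioo tk tk1, u t ≠ 0)
    (hu'tk : u' tk ≠ 0)
    (wk : ℝ → ℝ)
    (hwk : ∀ t, wk t = u' tk / Real.sqrt lam *
      Real.sin (Real.sqrt lam * r tk ^ (n - 1) * ∫ s in tk..t, 1 / r s ^ (n - 1))) :
    ∀ t ∈ Ioo tk tk1, |u t| ≤ |wk t| := by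
  have hsub : Ici tk ⊆ Ici t₀ := Ici_subset_Ici.2 htk
  intro t ht
  rw [hwk]
  exact abs_le_abs_comparisonSolution (p := fun s => r s ^ (n - 1)) hlam
    ((hr_cont.mono hsub).pow _)
    (fun x hx y hy hxy => pow_le_pow_left₀ (hr x (hsub hx)).1.le
      (hr_mono.monotoneOn (hsub hx) (hsub hy) hxy) _)
    (fun x hx => pow_pos (hr x (hsub hx)).1 _) (fun x hx => hu x (hsub hx))
    (fun x hx => hode x (hsub hx)) hutk hconsec hu'tk ht

/-- Upper comparison: `|u| ≤ |w_k|` on `(t_k, t_{k+1})`. -/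
theorem stmt6 (t₀ R lam : ℝ) (n : ℕ) (hn : 2 ≤ n) (hR : 0 < R) (hlam : 0 < lam)
    (r u u' : ℝ → ℝ)
    (hr_cont : ContinuousOn r (Ici t₀))
    (hr_mono : StrictMonoOn r (Ici t₀))
    (hr : ∀ t ∈ Ici t₀, 0 < r t ∧ r t < R)
    (hu : ∀ t ∈ Ici t₀, HasDerivAt u (u' t) t)
    (hode : ∀ t ∈ Ici t₀,
      HasDerivAt (fun s => r s ^ (n - 1) * u' s) (-(lam * r t ^ (n - 1) * u t)) t)
    (tk tk1 : ℝ) (htk : t₀ ≤ tk) (hkk1 : tk < tk1)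
    (hutk : u tk = 0) (hutk1 : u tk1 = 0)
    (hconsec : ∀ t ∈ Ioo tk tk1, u t ≠ 0)
    (hu'tk : u' tk ≠ 0)
    (wk : ℝ → ℝ)
    (hwk : ∀ t, wk t = u' tk / Real.sqrt lam *
      Real.sin (Real.sqrt lam * r tk ^ (n - 1) * ∫ s in tk..t, 1 / r s ^ (n - 1))) :
    ∀ t ∈ Ioo tk tk1, |u t| ≤ |wk t| :=
  stmt6_general t₀ R lam n hlam r u u' hr_cont hr_mono hr hu hode tk tk1 htk hutk hconsec hu'tk wk
    hwk
end

section
/- Let r be continuous, increasing, with 0 < r(t) < R on [t₀, ∞), n ≥ 2, λ > 0, and let u solve (r^{n-1} u')' + λ r^{n-1} u = 0 with u(t₀) = 0, u'(t₀) > 0, and zeros t₀ < t₁ < ⋯. Then for every k ≥ 1, u'(t_k)² > (r(t₀)/R)^{2(n-1)} · u'(t₀)². -/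
open Set Filter Topology

/-!
The energy `E = (r^{n-1} u')² + λ r^{2(n-1)} u²` satisfies `E' = 2(n-1) λ r^{2n-3} r' u² ≥ 0`
along solutions, so it is nondecreasing; it increases strictly before `t_k` because `u` cannot
vanish identically right after `t₀`, where `u'(t₀) ≠ 0`. At a zero `E = (r^{n-1} u')²`, so
`r(t₀)^{2(n-1)} u'(t₀)² < r(t_k)^{2(n-1)} u'(t_k)² ≤ R^{2(n-1)} u'(t_k)²`.
-/

theorem HasDerivAt.exists_mem_Ioo_ne {f : ℝ → ℝ} {f' a b : ℝ} (hf : HasDerivAt f f' a)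
    (hf' : f' ≠ 0) (hab : a < b) : ∃ c ∈ Ioo a b, f c ≠ f a := by
  have hright : ∀ᶠ z in 𝓝[>] a, f z ≠ f a :=
    nhdsWithin_mono _ (fun _ hz => ne_of_gt hz) (hf.eventually_ne hf')
  exact ((eventually_mem_set.2 (Ioo_mem_nhdsGT hab)).and hright).exists

theorem lt_of_hasDerivAt_nonneg_of_ne_zero {f f' : ℝ → ℝ} {a b c : ℝ}
    (hf : ∀ t ∈ Icc a b, HasDerivAt f (f' t) t) (hf' : ∀ t ∈ Icc a b, 0 ≤ f' t)
    (hc : c ∈ Ico a b) (hc' : f' c ≠ 0) : f a < f b := by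
  have hmono : MonotoneOn f (Icc a b) :=
    monotoneOn_of_hasDerivWithinAt_nonneg (convex_Icc a b)
      (fun t ht => (hf t ht).continuousAt.continuousWithinAt)
      (fun t ht => (hf t (interior_subset ht)).hasDerivWithinAt)
      (fun t ht => hf' t (interior_subset ht))
  have hcI : c ∈ Icc a b := Ico_subset_Icc_self hc
  obtain ⟨x, hx, hfx⟩ := (hf c hcI).exists_mem_Ioo_ne hc' hc.2
  have hxI : x ∈ Icc a b := ⟨hc.1.trans hx.1.le, hx.2.le⟩
  calc f a ≤ f c := hmono (left_mem_Icc.2 (hc.1.trans hc.2.le)) hcI hc.1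
    _ < f x := lt_of_le_of_ne (hmono hcI hxI hx.1.le) hfx.symm
    _ ≤ f b := hmono hxI (right_mem_Icc.2 (hc.1.trans hc.2.le)) hx.2.le

/-- The energy of a solution of `(r^m u')' + λ r^m u = 0`, where `m = n - 1`. -/
def radialEnergy (m : ℕ) (lam : ℝ) (r u u' : ℝ → ℝ) (t : ℝ) : ℝ :=
  (r t ^ m * u' t) ^ 2 + lam * r t ^ (2 * m) * u t ^ 2

theorem hasDerivAt_radialEnergy {m : ℕ} {lam t : ℝ} {r r' u u' : ℝ → ℝ}
    (hr : HasDerivAt r (r' t) t) (hu : HasDerivAt u (u' t) t)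
    (hode : HasDerivAt (fun s => r s ^ m * u' s) (-(lam * r t ^ m * u t)) t) :
    HasDerivAt (radialEnergy m lam r u u')
      (2 * m * lam * r t ^ (2 * m - 1) * r' t * u t ^ 2) t := by
  have h := (hode.pow 2).add (((hr.pow (2 * m)).mul (hu.pow 2)).const_mul lam)
  have hE : radialEnergy m lam r u u' = (fun s => r s ^ m * u' s) ^ 2 +
      fun s => lam * (r ^ (2 * m) * u ^ 2) s := by
    ext s
    simp only [radialEnergy, Pi.add_apply, Pi.pow_apply, Pi.mul_apply]
    ring
  rw [hE]
  refine h.congr_deriv ?_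
  push_cast [Pi.pow_apply]
  ring

theorem radialEnergy_of_eq_zero {m : ℕ} {lam t : ℝ} {r u u' : ℝ → ℝ} (hu : u t = 0) :
    radialEnergy m lam r u u' t = (r t ^ m * u' t) ^ 2 := by
  simp [radialEnergy, hu]

theorem stmt8_general (t₀ R lam : ℝ) (n : ℕ) (hn : 2 ≤ n) (hlam : 0 < lam)
    (r r' u u' : ℝ → ℝ)
    (hr : ∀ t ∈ Ici t₀, HasDerivAt r (r' t) t)
    (hr'_pos : ∀ t ∈ Ici t₀, 0 < r' t)
    (hr_bd : ∀ t ∈ Ici t₀, 0 < r t ∧ r t < R)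
    (hu : ∀ t ∈ Ici t₀, HasDerivAt u (u' t) t)
    (hode : ∀ t ∈ Ici t₀,
      HasDerivAt (fun s => r s ^ (n - 1) * u' s) (-(lam * r t ^ (n - 1) * u t)) t)
    (hu0 : u t₀ = 0) (hu'0 : 0 < u' t₀)
    (tseq : ℕ → ℝ) (htseq0 : tseq 0 = t₀) (htseq_mono : StrictMono tseq)
    (htseq_zero : ∀ k, u (tseq k) = 0)
    (k : ℕ) (hk : 1 ≤ k) :
    (r t₀ / R) ^ (2 * (n - 1)) * u' t₀ ^ 2 < u' (tseq k) ^ 2 := by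
  set m := n - 1
  have htk : t₀ < tseq k := htseq0 ▸ htseq_mono (by omega : 0 < k)
  have hIcc : Icc t₀ (tseq k) ⊆ Ici t₀ := Icc_subset_Ici_self
  obtain ⟨c, hc, huc⟩ := (hu t₀ self_mem_Ici).exists_mem_Ioo_ne hu'0.ne' htk
  rw [hu0] at huc
  have henergy : radialEnergy m lam r u u' t₀ < radialEnergy m lam r u u' (tseq k) := by
    refine lt_of_hasDerivAt_nonneg_of_ne_zero
      (fun t ht => hasDerivAt_radialEnergy (hr t (hIcc ht)) (hu t (hIcc ht)) (hode t (hIcc ht)))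
      (fun t ht => ?_) (Ioo_subset_Ico_self hc) ?_
    · have := (hr_bd t (hIcc ht)).1
      have := hr'_pos t (hIcc ht)
      positivity
    · have hm : (m : ℝ) ≠ 0 := Nat.cast_ne_zero.2 (by omega)
      have := (hr_bd c hc.1.le).1
      have := hr'_pos c hc.1.le
      positivity
  rw [radialEnergy_of_eq_zero hu0, radialEnergy_of_eq_zero (htseq_zero k)] at henergy
  obtain ⟨hrk, hrkR⟩ := hr_bd (tseq k) htk.le
  have hRm : 0 < R ^ (2 * m) := pow_pos (hrk.trans hrkR) _
  calc (r t₀ / R) ^ (2 * m) * u' t₀ ^ 2 = (r t₀ ^ m * u' t₀) ^ 2 / R ^ (2 * m) := by ring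
    _ < (r (tseq k) ^ m * u' (tseq k)) ^ 2 / R ^ (2 * m) := by gcongr
    _ = r (tseq k) ^ (2 * m) / R ^ (2 * m) * u' (tseq k) ^ 2 := by ring
    _ ≤ 1 * u' (tseq k) ^ 2 := by
        gcongr
        exact (div_le_one hRm).2 (pow_le_pow_left₀ hrk.le hrkR.le _)
    _ = u' (tseq k) ^ 2 := one_mul _

/-- Lower bound on derivatives at zeros: `u'(t_k)² > (r(t₀)/R)^{2(n-1)} u'(t₀)²` for `k ≥ 1`. -/
theorem stmt8 (t₀ R lam : ℝ) (n : ℕ) (hn : 2 ≤ n) (hR : 0 < R) (hlam : 0 < lam)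
    (r r' u u' : ℝ → ℝ)
    (hr : ∀ t ∈ Ici t₀, HasDerivAt r (r' t) t)
    (hr'_pos : ∀ t ∈ Ici t₀, 0 < r' t)
    (hr_bd : ∀ t ∈ Ici t₀, 0 < r t ∧ r t < R)
    (hu : ∀ t ∈ Ici t₀, HasDerivAt u (u' t) t)
    (hode : ∀ t ∈ Ici t₀,
      HasDerivAt (fun s => r s ^ (n - 1) * u' s) (-(lam * r t ^ (n - 1) * u t)) t)
    (hu0 : u t₀ = 0) (hu'0 : 0 < u' t₀)
    (tseq : ℕ → ℝ) (htseq0 : tseq 0 = t₀) (htseq_mono : StrictMono tseq)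
    (htseq_mem : ∀ k, tseq k ∈ Ici t₀)
    (htseq_zero : ∀ k, u (tseq k) = 0)
    (k : ℕ) (hk : 1 ≤ k) :
    (r t₀ / R) ^ (2 * (n - 1)) * u' t₀ ^ 2 < u' (tseq k) ^ 2 :=
  stmt8_general t₀ R lam n hn hlam r r' u u' hr hr'_pos hr_bd hu hode hu0 hu'0 tseq htseq0
    htseq_mono htseq_zero k hk
end
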